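/- Let q1, q2, q3, q4 be four pairwise distinct points of the plane ℝ² forming a trapezoid ordered sequentially: the segments [q1,q3] and [q2,q4] (the diagonals) have a common point, and q3 − q4 = t·(q2 − q1) for some real t > 0. Let h be the distance from q3 to the line through q1 and q2 (the height of the trapezoid, equal to the distance between the two parallel sides), and let r = (r12, r13, r14, r23, r24, r34) with r_ij = dist(q_i, q_j). Then Q(r) = 16 h² r12 r34; in particular the height satisfies h = (1/4)·√(Q(r)/(r12 r34)). -/

import Mathlib

noncomputable section

/-- `Q` as a function of the vector of mutual distances
`r = (r12, r13, r14, r23, r24, r34)` (indexed `0,…,5`). -/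
def Q (r : Fin 6 → ℝ) : ℝ :=
  -((r 0) ^ 2 * (r 1) ^ 2 - (r 0) ^ 2 * (r 2) ^ 2 - (r 0) ^ 2 * (r 3) ^ 2
      + 4 * (r 2) ^ 2 * (r 3) ^ 2 + (r 0) ^ 2 * (r 4) ^ 2 - 4 * (r 1) ^ 2 * (r 4) ^ 2
      + 2 * (r 0) ^ 3 * r 5 - 2 * r 0 * (r 1) ^ 2 * r 5 - 2 * r 0 * (r 2) ^ 2 * r 5
      - 2 * r 0 * (r 3) ^ 2 * r 5 - 2 * r 0 * (r 4) ^ 2 * r 5 + (r 1) ^ 2 * (r 5) ^ 2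
      - (r 2) ^ 2 * (r 5) ^ 2 - (r 3) ^ 2 * (r 5) ^ 2 + (r 4) ^ 2 * (r 5) ^ 2
      + 2 * r 0 * (r 5) ^ 3)

/-- Expansion of `‖w - s • v‖ ^ 2`. -/
lemma norm_sub_smul_sq (v w : EuclideanSpace ℝ (Fin 2)) (s : ℝ) :
    ‖w - s • v‖ ^ 2 = ‖w‖ ^ 2 - 2 * s * (inner ℝ v w : ℝ) + s ^ 2 * ‖v‖ ^ 2 := by
  rw [norm_sub_sq_real, real_inner_smul_right, norm_smul, real_inner_comm, mul_pow]
  simp [Real.norm_eq_abs, sq_abs]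
  ring

/-- The purely algebraic identity behind the trapezoid height formula. -/
lemma Q_alg (A B C D E F a b c t : ℝ)
    (hA2 : A ^ 2 = a) (hB2 : B ^ 2 = b)
    (hC2 : C ^ 2 = b - 2 * t * c + t ^ 2 * a)
    (hD2 : D ^ 2 = b - 2 * 1 * c + 1 ^ 2 * a)
    (hE2 : E ^ 2 = b - 2 * (1 + t) * c + (1 + t) ^ 2 * a)
    (hF2 : F ^ 2 = t ^ 2 * a) (hAF : A * F = t * a) :
    -(A ^ 2 * B ^ 2 - A ^ 2 * C ^ 2 - A ^ 2 * D ^ 2 + 4 * C ^ 2 * D ^ 2 + A ^ 2 * E ^ 2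
      - 4 * B ^ 2 * E ^ 2 + 2 * A ^ 3 * F - 2 * A * B ^ 2 * F - 2 * A * C ^ 2 * F
      - 2 * A * D ^ 2 * F - 2 * A * E ^ 2 * F + B ^ 2 * F ^ 2 - C ^ 2 * F ^ 2
      - D ^ 2 * F ^ 2 + E ^ 2 * F ^ 2 + 2 * A * F ^ 3)
      = 16 * t * (a * b - c ^ 2) := by
  have expand :
      -(A ^ 2 * B ^ 2 - A ^ 2 * C ^ 2 - A ^ 2 * D ^ 2 + 4 * C ^ 2 * D ^ 2 + A ^ 2 * E ^ 2
        - 4 * B ^ 2 * E ^ 2 + 2 * A ^ 3 * F - 2 * A * B ^ 2 * F - 2 * A * C ^ 2 * F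
        - 2 * A * D ^ 2 * F - 2 * A * E ^ 2 * F + B ^ 2 * F ^ 2 - C ^ 2 * F ^ 2
        - D ^ 2 * F ^ 2 + E ^ 2 * F ^ 2 + 2 * A * F ^ 3)
      = -(A ^ 2 * B ^ 2 - A ^ 2 * C ^ 2 - A ^ 2 * D ^ 2 + 4 * C ^ 2 * D ^ 2 + A ^ 2 * E ^ 2
        - 4 * B ^ 2 * E ^ 2 + 2 * A ^ 2 * (A * F) - 2 * (A * F) * B ^ 2 - 2 * (A * F) * C ^ 2
        - 2 * (A * F) * D ^ 2 - 2 * (A * F) * E ^ 2 + B ^ 2 * F ^ 2 - C ^ 2 * F ^ 2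
        - D ^ 2 * F ^ 2 + E ^ 2 * F ^ 2 + 2 * (A * F) * F ^ 2) := by ring
  rw [expand, hA2, hB2, hC2, hD2, hE2, hF2, hAF]
  ring

set_option maxHeartbeats 1000000 in
/-- For a sequentially ordered trapezoid `q1 q2 q3 q4` in the plane (the diagonals
`[q1,q3]` and `[q2,q4]` meet, and `q3 − q4 = t·(q2 − q1)` with `t > 0`), letting
`h` be the distance from `q3` to the line through `q1` and `q2` (the height) and
`r` the vector of mutual distances, one has `Q(r) = 16 h² r12 r34`; in particular
`h = (1/4)·√(Q(r)/(r12 r34))`. -/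
theorem Q_eq_sixteen_height_sq (q1 q2 q3 q4 : EuclideanSpace ℝ (Fin 2))
    (hne : q1 ≠ q2 ∧ q1 ≠ q3 ∧ q1 ≠ q4 ∧ q2 ≠ q3 ∧ q2 ≠ q4 ∧ q3 ≠ q4)
    (hdiag : (segment ℝ q1 q3 ∩ segment ℝ q2 q4).Nonempty)
    (hpar : ∃ t : ℝ, 0 < t ∧ q3 - q4 = t • (q2 - q1))
    (h : ℝ)
    (hh : h = Metric.infDist q3 (affineSpan ℝ ({q1, q2} : Set (EuclideanSpace ℝ (Fin 2))) :
      Set (EuclideanSpace ℝ (Fin 2))))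
    (r : Fin 6 → ℝ)
    (hr : r = ![dist q1 q2, dist q1 q3, dist q1 q4, dist q2 q3, dist q2 q4, dist q3 q4]) :
    Q r = 16 * h ^ 2 * dist q1 q2 * dist q3 q4 ∧
      h = (1 / 4) * Real.sqrt (Q r / (dist q1 q2 * dist q3 q4)) := by
  obtain ⟨hne12, hne13, hne14, hne23, hne24, hne34⟩ := hne
  obtain ⟨t, ht, hq34⟩ := hpar
  set v : EuclideanSpace ℝ (Fin 2) := q2 - q1 with hv
  set w : EuclideanSpace ℝ (Fin 2) := q3 - q1 with hw
  set a : ℝ := ‖v‖ ^ 2 with hadef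
  set b : ℝ := ‖w‖ ^ 2 with hbdef
  set c : ℝ := (inner ℝ v w : ℝ) with hcdef
  have hvne : v ≠ 0 := sub_ne_zero.mpr (Ne.symm hne12)
  have ha : 0 < a := pow_pos (norm_pos_iff.mpr hvne) 2
  have ha' : a ≠ 0 := ne_of_gt ha
  have hq4 : q4 = q3 - t • v := by
    have := hq34
    rw [sub_eq_iff_eq_add] at this
    rw [this]; abel
  -- the squared distances
  have hr0 : dist q1 q2 = ‖v‖ := by rw [dist_comm, dist_eq_norm]
  have hr1 : dist q1 q3 ^ 2 = b := by rw [dist_comm, dist_eq_norm, hbdef]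
  have hr2 : dist q1 q4 ^ 2 = b - 2 * t * c + t ^ 2 * a := by
    rw [dist_comm, dist_eq_norm]
    have e : q4 - q1 = w - t • v := by rw [hq4, hw]; abel
    rw [e]; exact norm_sub_smul_sq v w t
  have hr3 : dist q2 q3 ^ 2 = b - 2 * 1 * c + 1 ^ 2 * a := by
    rw [dist_comm, dist_eq_norm]
    have e : q3 - q2 = w - (1 : ℝ) • v := by rw [hw, hv, one_smul]; abel
    rw [e]; exact norm_sub_smul_sq v w 1
  have hr4 : dist q2 q4 ^ 2 = b - 2 * (1 + t) * c + (1 + t) ^ 2 * a := by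
    rw [dist_comm, dist_eq_norm]
    have e : q4 - q2 = w - ((1 : ℝ) + t) • v := by
      rw [hq4, hw, hv, add_smul, one_smul]; abel
    rw [e]; exact norm_sub_smul_sq v w (1 + t)
  have hr5 : dist q3 q4 = t * ‖v‖ := by
    rw [dist_eq_norm, hq34, norm_smul, Real.norm_eq_abs, abs_of_pos ht]
  have hAF : dist q1 q2 * dist q3 q4 = t * a := by
    rw [hr0, hr5, hadef]; ring
  have hF2 : dist q3 q4 ^ 2 = t ^ 2 * a := by rw [hr5, hadef]; ring
  have hA2 : dist q1 q2 ^ 2 = a := by rw [hr0, hadef]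
  -- the height
  set S : Set (EuclideanSpace ℝ (Fin 2)) :=
    (affineSpan ℝ ({q1, q2} : Set (EuclideanSpace ℝ (Fin 2))) :
      Set (EuclideanSpace ℝ (Fin 2))) with hS
  set p0 : EuclideanSpace ℝ (Fin 2) := (c / a) • v + q1 with hp0
  have hp0mem : p0 ∈ S := by
    have := smul_vsub_vadd_mem_affineSpan_pair (c / a) q1 q2
    simpa [hp0, vsub_eq_sub, vadd_eq_add, hv, hS] using this
  have hq3p0 : q3 - p0 = w - (c / a) • v := by rw [hp0, hw]; abel
  have haux : ∀ x y z : ℝ, x ≠ 0 →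
      y - 2 * (z / x) * z + (z / x) ^ 2 * x = y - z ^ 2 / x := by
    intro x y z hx; field_simp; ring
  have hdistp0 : dist q3 p0 ^ 2 = b - c ^ 2 / a := by
    rw [dist_eq_norm, hq3p0]
    calc ‖w - (c / a) • v‖ ^ 2
        = b - 2 * (c / a) * c + (c / a) ^ 2 * a := norm_sub_smul_sq v w (c / a)
      _ = b - c ^ 2 / a := haux a b c ha'
  have hle : ∀ y ∈ S, dist q3 p0 ≤ dist q3 y := by
    intro y hy
    have hy' : ∃ s : ℝ, y = s • v + q1 := by
      have h1 : (y -ᵥ q1) +ᵥ q1 ∈ affineSpan ℝ ({q1, q2} : Set (EuclideanSpace ℝ (Fin 2))) := by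
        simpa [hS] using hy
      rw [vadd_left_mem_affineSpan_pair] at h1
      obtain ⟨s, hs⟩ := h1
      have hs' : s • (q2 - q1) = y - q1 := by simpa [vsub_eq_sub] using hs
      exact ⟨s, by rw [hv, hs']; abel⟩
    obtain ⟨s, rfl⟩ := hy'
    have hdy : dist q3 (s • v + q1) ^ 2 = b - 2 * s * c + s ^ 2 * a := by
      rw [dist_eq_norm]
      have e : q3 - (s • v + q1) = w - s • v := by rw [hw]; abel
      rw [e]; exact norm_sub_smul_sq v w s
    have hsq : dist q3 p0 ^ 2 ≤ dist q3 (s • v + q1) ^ 2 := by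
      rw [hdistp0, hdy]
      have key : 0 ≤ (a * s - c) ^ 2 / a := by positivity
      have e : b - 2 * s * c + s ^ 2 * a - (b - c ^ 2 / a) = (a * s - c) ^ 2 / a := by
        field_simp; ring
      linarith
    have := Real.sqrt_le_sqrt hsq
    rwa [Real.sqrt_sq dist_nonneg, Real.sqrt_sq dist_nonneg] at this
  have hSne : S.Nonempty := ⟨q1, by
    have := left_mem_affineSpan_pair ℝ q1 q2
    simpa [hS] using this⟩
  have hheq : h = dist q3 p0 := by
    rw [hh]
    refine le_antisymm (Metric.infDist_le_dist_of_mem hp0mem) ?_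
    rw [Metric.infDist_eq_iInf]
    haveI : Nonempty S := hSne.to_subtype
    exact le_ciInf fun y => hle y y.2
  have hh2 : a * h ^ 2 = a * b - c ^ 2 := by
    rw [hheq, hdistp0]
    field_simp
  have hhnn : 0 ≤ h := hheq ▸ dist_nonneg
  -- main identity
  have e0 : r 0 = dist q1 q2 := by rw [hr]; rfl
  have e1 : r 1 = dist q1 q3 := by rw [hr]; rfl
  have e2 : r 2 = dist q1 q4 := by rw [hr]; rfl
  have e3 : r 3 = dist q2 q3 := by rw [hr]; rfl
  have e4 : r 4 = dist q2 q4 := by rw [hr]; rfl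
  have e5 : r 5 = dist q3 q4 := by rw [hr]; rfl
  have hQ : Q r = 16 * t * (a * b - c ^ 2) := by
    rw [Q, e0, e1, e2, e3, e4, e5]
    exact Q_alg _ _ _ _ _ _ a b c t hA2 hr1 hr2 hr3 hr4 hF2 hAF
  have hmain : Q r = 16 * h ^ 2 * dist q1 q2 * dist q3 q4 := by
    have e : 16 * h ^ 2 * dist q1 q2 * dist q3 q4 = 16 * h ^ 2 * (t * a) := by
      rw [mul_assoc, hAF]
    rw [hQ, e]
    nlinarith [hh2]
  refine ⟨hmain, ?_⟩
  have hApos : 0 < dist q1 q2 := dist_pos.mpr hne12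
  have hFpos : 0 < dist q3 q4 := dist_pos.mpr hne34
  have ediv : Q r / (dist q1 q2 * dist q3 q4) = 16 * h ^ 2 := by
    rw [hmain]
    field_simp
  rw [ediv]
  have esq : Real.sqrt (16 * h ^ 2) = 4 * h := by
    rw [show (16 : ℝ) * h ^ 2 = (4 * h) ^ 2 by ring, Real.sqrt_sq (by linarith)]
  rw [esq]
  ring
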